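/- For every M > M_c the free energy is unbounded below on 𝒴_M: for every A ∈ ℝ there exists h ∈ 𝒴_M with ℱ[h] < A (i.e. μ_M = −∞). -/

import Mathlib

open MeasureTheory Real Metric Set

noncomputable section

abbrev E (d : ℕ) := EuclideanSpace ℝ (Fin d)

def mexp (d : ℕ) : ℝ := 2 * ((d : ℝ) - 1) / d

def sigmaD (d : ℕ) : ℝ := 2 * Real.pi ^ ((d : ℝ) / 2) / Real.Gamma ((d : ℝ) / 2)

def cD (d : ℕ) : ℝ := 1 / (((d : ℝ) - 2) * sigmaD d)

def Wfun (d : ℕ) (h : E d → ℝ) : ℝ :=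
  ∫ x : E d, ∫ y : E d, h x * h y * ‖x - y‖ ^ (-((d : ℝ) - 2))

def nrm (d : ℕ) (p : ℝ) (h : E d → ℝ) : ℝ :=
  (eLpNorm h (ENNReal.ofReal p) volume).toReal

def InL1Lm (d : ℕ) (h : E d → ℝ) : Prop :=
  MemLp h 1 volume ∧ MemLp h (ENNReal.ofReal (mexp d)) volume ∧ 0 ≤ᵐ[volume] h

def Ffun (d : ℕ) (h : E d → ℝ) : ℝ :=
  (1 / (mexp d - 1)) * (∫ x : E d, h x ^ mexp d) - (cD d / 2) * Wfun d h

def Cstar (d : ℕ) : ℝ :=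
  sSup { r : ℝ | ∃ h : E d → ℝ, InL1Lm d h ∧ ¬ (h =ᵐ[volume] 0) ∧
    r = Wfun d h / (nrm d 1 h ^ (2 / (d : ℝ)) * nrm d (mexp d) h ^ mexp d) }

def Mc (d : ℕ) : ℝ := (2 / ((mexp d - 1) * Cstar d * cD d)) ^ ((d : ℝ) / 2)

def YM (d : ℕ) (M : ℝ) : Set (E d → ℝ) := { h | InL1Lm d h ∧ nrm d 1 h = M }

def M2 (d : ℕ) (h : E d → ℝ) : ℝ := ∫ x : E d, ‖x‖ ^ 2 * h x

def Gfun (d : ℕ) (h : E d → ℝ) : ℝ := Ffun d h + M2 d h / 2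

def ZM (d : ℕ) (M : ℝ) : Set (E d → ℝ) :=
  { h | h ∈ YM d M ∧ Integrable (fun x : E d => ‖x‖ ^ 2 * h x) volume }

def lap (d : ℕ) (f : E d → ℝ) (x : E d) : ℝ :=
  ∑ i : Fin d, fderiv ℝ (fun y => fderiv ℝ f y (EuclideanSpace.single i 1)) x (EuclideanSpace.single i 1)

/-!
Under the mass-preserving dilation `h ↦ λ^d h(λ ·)` both terms of the free energy scale like
`λ^(d-2)` (the Newtonian kernel is homogeneous of degree `2 - d`, and `d (m - 1) = d - 2`), so it
suffices to find one density of mass `M` with negative free energy and let `λ → ∞`.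
The quotient `W(h) / (‖h‖₁^(2/d) ‖h‖_m^m)` is invariant under `h ↦ c h`, and a density of
mass `M` has negative free energy as soon as its quotient exceeds `2 / ((m - 1) c_d M^(2/d))`,
which is below `C_*` exactly when `M > M_c`: a near-maximiser of the quotient, rescaled to
mass `M`, will do.
That `C_* > 0` comes from `W(𝟙_B) > 0`, i.e. from local integrability of `|z|^(2-d)`.
-/

open Filter
open scoped ENNReal

section Exponents

variable {d : ℕ}

lemma natCast_mul_mexp_sub_one (hd : d ≠ 0) : (d : ℝ) * (mexp d - 1) = d - 2 := by
  have : (d : ℝ) ≠ 0 := Nat.cast_ne_zero.mpr hd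
  rw [mexp]; field_simp; ring

lemma two_div_add_mexp (hd : d ≠ 0) : 2 / (d : ℝ) + mexp d = 2 := by
  have : (d : ℝ) ≠ 0 := Nat.cast_ne_zero.mpr hd
  rw [mexp]; field_simp; ring

lemma one_lt_mexp (hd : 2 < d) : 1 < mexp d := by
  have : (2 : ℝ) < d := by exact_mod_cast hd
  rw [mexp, lt_div_iff₀ (by linarith)]; linarith

lemma cD_pos (hd : 2 < d) : 0 < cD d := by
  have hd' : (2 : ℝ) < d := by exact_mod_cast hd
  have : 0 < Real.Gamma ((d : ℝ) / 2) := Real.Gamma_pos_of_pos (by linarith)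
  have : 0 < sigmaD d := by unfold sigmaD; positivity
  have : 0 < (d : ℝ) - 2 := by linarith
  unfold cD; positivity

end Exponents

section LpNorms

variable {d : ℕ} {h : E d → ℝ} {p : ℝ}

lemma nrm_nonneg : 0 ≤ nrm d p h := ENNReal.toReal_nonneg

lemma nrm_rpow_eq_integral (hp : 0 < p) (hh : MemLp h (ENNReal.ofReal p) volume)
    (h0 : 0 ≤ᵐ[volume] h) : nrm d p h ^ p = ∫ x, h x ^ p := by
  have hp0 : ENNReal.ofReal p ≠ 0 := by simpa using hp
  have hint : 0 ≤ ∫ x, ‖h x‖ ^ p := integral_nonneg fun x => by positivity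
  rw [nrm, hh.eLpNorm_eq_integral_rpow_norm hp0 ENNReal.ofReal_ne_top,
    ENNReal.toReal_ofReal hp.le, ENNReal.toReal_ofReal (by positivity), ← Real.rpow_mul hint,
    inv_mul_cancel₀ hp.ne', Real.rpow_one]
  exact integral_congr_ae (h0.mono fun x hx => by simp only [Real.norm_of_nonneg hx])

lemma nrm_pos (hp : 0 < p) (hh : MemLp h (ENNReal.ofReal p) volume) (hne : ¬ h =ᵐ[volume] 0) :
    0 < nrm d p h :=
  ENNReal.toReal_pos (fun h0 => hne ((eLpNorm_eq_zero_iff hh.1 (by simpa using hp)).mp h0)) hh.2.ne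

lemma nrm_const_mul {c : ℝ} (hc : 0 ≤ c) (h : E d → ℝ) (p : ℝ) :
    nrm d p (fun x => c * h x) = c * nrm d p h := by
  rw [nrm, show (fun x => c * h x) = c • h from rfl, eLpNorm_const_smul, nrm,
    ENNReal.toReal_mul, toReal_enorm, Real.norm_of_nonneg hc]

end LpNorms

section CompSmul

variable {F G : Type*} [NormedAddCommGroup F] [NormedSpace ℝ F] [FiniteDimensional ℝ F]
  [MeasurableSpace F] [BorelSpace F] {μ : Measure F} [μ.IsAddHaarMeasure]
  [NormedAddCommGroup G] {g : F → G} {p : ℝ≥0∞} {l : ℝ}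

lemma MemLp.comp_smul (hg : MemLp g p μ) (hl : l ≠ 0) : MemLp (fun x => g (l • x)) p μ := by
  have hmap := Measure.map_addHaar_smul μ hl
  refine (memLp_map_measure_iff ?_ (measurable_const_smul l).aemeasurable).mp ?_
  · rw [hmap]; exact hg.1.mono_ac Measure.smul_absolutelyContinuous
  · rw [hmap]; exact hg.smul_measure ENNReal.ofReal_ne_top

lemma eLpNorm_comp_smul (hg : AEStronglyMeasurable g μ) (hp : p ≠ ⊤) (hl : l ≠ 0) :
    eLpNorm (fun x => g (l • x)) p μ
      = ENNReal.ofReal |(l ^ Module.finrank ℝ F)⁻¹| ^ (1 / p).toReal * eLpNorm g p μ := by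
  have hmap := Measure.map_addHaar_smul μ hl
  have hg' : AEStronglyMeasurable g (Measure.map (fun x => l • x) μ) := by
    rw [hmap]; exact hg.mono_ac Measure.smul_absolutelyContinuous
  rw [← Function.comp_def, ← eLpNorm_map_measure hg' (measurable_const_smul l).aemeasurable,
    hmap, eLpNorm_smul_measure_of_ne_top hp, smul_eq_mul]

end CompSmul

section Dilation

variable {d : ℕ} {l : ℝ}

def dilate (d : ℕ) (l : ℝ) (g : E d → ℝ) : E d → ℝ := fun x => l ^ d * g (l • x)

lemma integral_comp_smul_of_pos (f : E d → ℝ) (hl : 0 < l) :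
    ∫ x, f (l • x) = (l ^ d)⁻¹ * ∫ x, f x := by
  rw [Measure.integral_comp_smul_of_nonneg volume f l (hR := hl.le), finrank_euclideanSpace_fin,
    smul_eq_mul]

lemma integral_integral_comp_smul_of_pos (k : E d → E d → ℝ) (hl : 0 < l) :
    ∫ x, ∫ y, k (l • x) (l • y) = ((l ^ d)⁻¹) ^ 2 * ∫ x, ∫ y, k x y := by
  simp_rw [integral_comp_smul_of_pos (k (l • _)) hl, integral_const_mul,
    integral_comp_smul_of_pos (fun x => ∫ y, k x y) hl]
  ring

lemma ae_nonneg_comp_smul {g : E d → ℝ} (h0 : 0 ≤ᵐ[volume] g) (hl : l ≠ 0) :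
    ∀ᵐ x ∂(volume : Measure (E d)), 0 ≤ g (l • x) :=
  (Measure.quasiMeasurePreserving_smul volume hl).ae h0

lemma InL1Lm.dilate {g : E d → ℝ} (hg : InL1Lm d g) (hl : 0 < l) : InL1Lm d (dilate d l g) :=
  ⟨(MemLp.comp_smul hg.1 hl.ne').const_mul _, (MemLp.comp_smul hg.2.1 hl.ne').const_mul _,
    (ae_nonneg_comp_smul hg.2.2 hl.ne').mono fun x hx => mul_nonneg (by positivity) hx⟩

lemma nrm_one_dilate {g : E d → ℝ} (hg : AEStronglyMeasurable g volume) (hl : 0 < l) :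
    nrm d 1 (dilate d l g) = nrm d 1 g := by
  have hld : 0 < l ^ d := by positivity
  rw [nrm, nrm, ENNReal.ofReal_one, show dilate d l g = (l ^ d) • fun x => g (l • x) from rfl,
    eLpNorm_const_smul,
    eLpNorm_comp_smul hg ENNReal.one_ne_top hl.ne', finrank_euclideanSpace_fin, ← mul_assoc]
  simp [abs_of_pos hld, Real.enorm_of_nonneg hld.le, ← ENNReal.ofReal_mul hld.le, hld.ne']

lemma integral_rpow_dilate {g : E d → ℝ} (h0 : 0 ≤ᵐ[volume] g) (hl : 0 < l) (p : ℝ) :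
    ∫ x, dilate d l g x ^ p = l ^ ((d : ℝ) * (p - 1)) * ∫ x, g x ^ p := by
  have hld : 0 < l ^ d := by positivity
  have hpow : ∫ x, dilate d l g x ^ p = ∫ x, (l ^ d) ^ p * g (l • x) ^ p :=
    integral_congr_ae <| (ae_nonneg_comp_smul h0 hl.ne').mono fun x hx =>
      Real.mul_rpow hld.le hx
  rw [hpow, integral_const_mul, integral_comp_smul_of_pos (fun x => g x ^ p) hl, ← mul_assoc]
  congr 1
  rw [← Real.rpow_natCast, ← Real.rpow_mul hl.le, ← Real.rpow_neg hl.le, ← Real.rpow_add hl]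
  ring_nf

lemma Wfun_dilate (g : E d → ℝ) (hl : 0 < l) :
    Wfun d (dilate d l g) = l ^ ((d : ℝ) - 2) * Wfun d g := by
  have hker : ∀ x y : E d, dilate d l g x * dilate d l g y * ‖x - y‖ ^ (-((d : ℝ) - 2))
      = (l ^ d) ^ 2 * l ^ ((d : ℝ) - 2) *
        (g (l • x) * g (l • y) * ‖l • x - l • y‖ ^ (-((d : ℝ) - 2))) := by
    intro x y
    rw [← smul_sub, norm_smul, Real.norm_of_nonneg hl.le, Real.mul_rpow hl.le (norm_nonneg _),
      Real.rpow_neg hl.le]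
    simp only [dilate]
    field_simp
  simp_rw [Wfun, hker, integral_const_mul]
  rw [integral_integral_comp_smul_of_pos
    (fun u v => g u * g v * ‖u - v‖ ^ (-((d : ℝ) - 2))) hl]
  have : l ^ d ≠ 0 := by positivity
  field_simp

lemma Ffun_dilate (hd : d ≠ 0) {g : E d → ℝ} (h0 : 0 ≤ᵐ[volume] g) (hl : 0 < l) :
    Ffun d (dilate d l g) = l ^ ((d : ℝ) - 2) * Ffun d g := by
  rw [Ffun, Ffun, integral_rpow_dilate h0 hl, natCast_mul_mexp_sub_one hd, Wfun_dilate g hl]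
  ring

end Dilation

section NewtonKernel

variable {d : ℕ}

lemma nontrivial_E (hd : 0 < d) : Nontrivial (E d) :=
  Module.nontrivial_of_finrank_pos (R := ℝ) (by simpa using hd)

lemma sub_mem_ball_zero_two {F : Type*} [SeminormedAddCommGroup F] {x y : F}
    (hx : x ∈ ball 0 1) (hy : y ∈ ball 0 1) : x - y ∈ ball 0 2 := by
  rw [mem_ball_zero_iff] at *
  linarith [norm_sub_le x y]

lemma indicator_one_mul_eq_indicator {α : Type*} (s : Set α) (f : α → ℝ) (a : α) :
    s.indicator 1 a * f a = s.indicator f a := by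
  by_cases ha : a ∈ s <;> simp [ha]

def newtonKernel (d : ℕ) (z : E d) : ℝ := ‖z‖ ^ (-((d : ℝ) - 2))

lemma Wfun_eq_integral_newtonKernel (h : E d → ℝ) :
    Wfun d h = ∫ x, ∫ y, h x * h y * newtonKernel d (x - y) := rfl

lemma newtonKernel_nonneg (z : E d) : 0 ≤ newtonKernel d z := by
  unfold newtonKernel; positivity

lemma newtonKernel_pos {z : E d} (hz : z ≠ 0) : 0 < newtonKernel d z :=
  Real.rpow_pos_of_pos (norm_pos_iff.mpr hz) _

lemma integrable_indicator_ball_newtonKernel (hd : 2 < d) (R : ℝ) :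
    Integrable ((ball (0 : E d) R).indicator (newtonKernel d)) := by
  refine (integrableOn_ball_of_norm_le_rpow (C := 1) (α := (d : ℝ) - 2) (by simp; omega)
    (by rw [finrank_euclideanSpace_fin]; linarith) (ae_of_all _ fun z => ?_)
    (by unfold newtonKernel; fun_prop : Measurable _).aestronglyMeasurable).integrable_indicator
    measurableSet_ball
  rw [one_mul, Real.norm_of_nonneg (newtonKernel_nonneg z), newtonKernel]

lemma indicator_ball_mul_newtonKernel_eq (x y : E d) :
    (ball (0 : E d) 1).indicator 1 x * (ball (0 : E d) 1).indicator 1 y * newtonKernel d (x - y)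
      = (ball (0 : E d) 1).indicator 1 x * ((ball (0 : E d) 1).indicator 1 y *
        (ball (0 : E d) 2).indicator (newtonKernel d) (x - y)) := by
  by_cases hxy : x ∈ ball (0 : E d) 1 ∧ y ∈ ball (0 : E d) 1
  · have hxy2 : x - y ∈ ball (0 : E d) 2 := sub_mem_ball_zero_two hxy.1 hxy.2
    simp [hxy.1, hxy.2, hxy2]
  · rcases not_and_or.mp hxy with h | h <;> simp [h]

lemma integral_indicator_ball_mul_newtonKernel_pos (hd : 2 < d) {x : E d}
    (hx : x ∈ ball (0 : E d) 1) :
    0 < ∫ t, (ball (0 : E d) 1).indicator 1 t *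
      (ball (0 : E d) 2).indicator (newtonKernel d) (x - t) := by
  have hK0 : 0 ≤ (ball (0 : E d) 2).indicator (newtonKernel d) :=
    indicator_nonneg fun z _ => newtonKernel_nonneg z
  simp_rw [indicator_one_mul_eq_indicator _
    (fun t => (ball (0 : E d) 2).indicator (newtonKernel d) (x - t))]
  rw [integral_pos_iff_support_of_nonneg (indicator_nonneg fun t _ => hK0 _)
    (((integrable_indicator_ball_newtonKernel hd 2).comp_sub_left x).indicator measurableSet_ball)]
  have hsupp : ball (0 : E d) 1 \ {x} ⊆
      Function.support ((ball (0 : E d) 1).indicator fun t =>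
        (ball (0 : E d) 2).indicator (newtonKernel d) (x - t)) := by
    rintro t ⟨ht, htx⟩
    have hxt : x - t ∈ ball (0 : E d) 2 := sub_mem_ball_zero_two hx ht
    rw [Function.mem_support, indicator_of_mem ht, indicator_of_mem hxt]
    exact (newtonKernel_pos (sub_ne_zero.mpr (Ne.symm htx))).ne'
  have := nontrivial_E (d := d) (by omega)
  calc (0 : ℝ≥0∞) < volume (ball (0 : E d) 1 \ {x}) := by
        rw [measure_sdiff_null (measure_singleton x)]; exact measure_ball_pos _ _ one_pos
    _ ≤ _ := measure_mono hsupp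

lemma Wfun_indicator_ball_pos (hd : 2 < d) : 0 < Wfun d ((ball (0 : E d) 1).indicator 1) := by
  simp_rw [Wfun_eq_integral_newtonKernel, indicator_ball_mul_newtonKernel_eq, integral_const_mul]
  set χ : E d → ℝ := (ball (0 : E d) 1).indicator 1
  set K := (ball (0 : E d) 2).indicator (newtonKernel d)
  have hχ : Integrable χ :=
    (integrableOn_const measure_ball_lt_top.ne).integrable_indicator measurableSet_ball
  have hχ0 : 0 ≤ χ := indicator_nonneg fun _ _ => zero_le_one
  have hK0 : 0 ≤ K := indicator_nonneg fun z _ => newtonKernel_nonneg z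
  have hconv : Integrable fun x => ∫ t, χ t * K (x - t) := by
    convert hχ.integrable_convolution (ContinuousLinearMap.mul ℝ ℝ)
      (integrable_indicator_ball_newtonKernel hd 2) using 1
    ext x; simp [K, convolution_def]
  have hφ : Integrable fun x => χ x * ∫ t, χ t * K (x - t) :=
    hconv.bdd_mul (c := 1) hχ.aestronglyMeasurable (ae_of_all _ fun x => by
      by_cases hx : x ∈ ball (0 : E d) 1 <;> simp [χ, hx])
  have hφ0 : 0 ≤ fun x => χ x * ∫ t, χ t * K (x - t) := fun x =>
    mul_nonneg (hχ0 x) (integral_nonneg fun t => mul_nonneg (hχ0 t) (hK0 _))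
  have := nontrivial_E (d := d) (by omega)
  rw [integral_pos_iff_support_of_nonneg hφ0 hφ]
  calc (0 : ℝ≥0∞) < volume (ball (0 : E d) 1) := measure_ball_pos _ _ one_pos
    _ ≤ _ := measure_mono fun x hx => by
      rw [Function.mem_support, show χ x = 1 from indicator_of_mem hx _, one_mul]
      exact (integral_indicator_ball_mul_newtonKernel_pos hd hx).ne'

end NewtonKernel

section Quotient

variable {d : ℕ} {h : E d → ℝ} {M : ℝ}

def hlsQuotient (d : ℕ) (h : E d → ℝ) : ℝ :=
  Wfun d h / (nrm d 1 h ^ (2 / (d : ℝ)) * nrm d (mexp d) h ^ mexp d)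

/-- A nonzero `h ≥ 0` of mass `M` has `Ffun d h < 0` iff `criticalQuotient d M < hlsQuotient d h`;
`Mc d` is the mass at which `criticalQuotient` equals `Cstar d`. -/
def criticalQuotient (d : ℕ) (M : ℝ) : ℝ := 2 / ((mexp d - 1) * cD d * M ^ (2 / (d : ℝ)))

lemma InL1Lm.const_mul (hh : InL1Lm d h) {c : ℝ} (hc : 0 ≤ c) : InL1Lm d fun x => c * h x :=
  ⟨hh.1.const_mul c, hh.2.1.const_mul c, hh.2.2.mono fun _ hx => mul_nonneg hc hx⟩

lemma Wfun_const_mul (h : E d → ℝ) (c : ℝ) :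
    Wfun d (fun x => c * h x) = c ^ 2 * Wfun d h := by
  simp_rw [Wfun, ← integral_const_mul]
  congr 1; ext x; congr 1; ext y
  ring

lemma hlsQuotient_const_mul (hd : d ≠ 0) {c : ℝ} (hc : 0 < c) (h : E d → ℝ) :
    hlsQuotient d (fun x => c * h x) = hlsQuotient d h := by
  have hc2 : c ^ 2 = c ^ (2 / (d : ℝ)) * c ^ mexp d := by
    rw [← Real.rpow_add hc, two_div_add_mexp hd]; norm_cast
  rw [hlsQuotient, hlsQuotient, Wfun_const_mul, nrm_const_mul hc.le, nrm_const_mul hc.le,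
    Real.mul_rpow hc.le nrm_nonneg, Real.mul_rpow hc.le nrm_nonneg, mul_mul_mul_comm, ← hc2,
    mul_div_mul_left _ _ (by positivity)]

lemma InL1Lm_indicator_ball : InL1Lm d ((ball (0 : E d) 1).indicator 1) :=
  ⟨memLp_indicator_const 1 measurableSet_ball 1 (Or.inr measure_ball_lt_top.ne),
    memLp_indicator_const _ measurableSet_ball 1 (Or.inr measure_ball_lt_top.ne),
    ae_of_all _ (indicator_nonneg fun _ _ => zero_le_one)⟩

lemma indicator_ball_not_ae_eq_zero (hd : 0 < d) :
    ¬ (ball (0 : E d) 1).indicator (1 : E d → ℝ) =ᵐ[volume] 0 := by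
  have := nontrivial_E hd
  rw [indicator_ae_eq_zero, Function.support_one, inter_univ]
  exact (measure_ball_pos _ _ one_pos).ne'

lemma hlsQuotient_indicator_ball_pos (hd : 2 < d) :
    0 < hlsQuotient d ((ball (0 : E d) 1).indicator 1) := by
  have hne := indicator_ball_not_ae_eq_zero (d := d) (by omega)
  have h1 := nrm_pos one_pos (by simpa using InL1Lm_indicator_ball.1) hne
  have hm := nrm_pos (zero_lt_one.trans (one_lt_mexp hd)) InL1Lm_indicator_ball.2.1 hne
  have := Wfun_indicator_ball_pos hd
  unfold hlsQuotient; positivity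

lemma criticalQuotient_lt_Cstar (hd : 2 < d) (hC : 0 < Cstar d) (hM : Mc d < M) :
    0 < M ∧ criticalQuotient d M < Cstar d := by
  have hm : 0 < mexp d - 1 := by linarith [one_lt_mexp hd]
  have hc := cD_pos hd
  have hd' : (0 : ℝ) < d := by exact_mod_cast (by omega : 0 < d)
  set B := 2 / ((mexp d - 1) * Cstar d * cD d)
  have hB : 0 < B := by positivity
  have hM0 : 0 < M := (Real.rpow_pos_of_pos hB _).trans hM
  have hBM : B < M ^ (2 / (d : ℝ)) := by
    rw [← inv_div, Real.lt_rpow_inv_iff_of_pos hB.le hM0.le (by positivity)]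
    exact hM
  refine ⟨hM0, ?_⟩
  have : 0 < M ^ (2 / (d : ℝ)) := by positivity
  rw [criticalQuotient, div_lt_iff₀ (by positivity)]
  rw [div_lt_iff₀ (by positivity)] at hBM
  linarith

lemma exists_criticalQuotient_lt_hlsQuotient (hd : 2 < d) (hM : Mc d < M) :
    0 < M ∧ ∃ h : E d → ℝ, InL1Lm d h ∧ ¬ h =ᵐ[volume] 0 ∧
      criticalQuotient d M < hlsQuotient d h := by
  set S := {r | ∃ h : E d → ℝ, InL1Lm d h ∧ ¬ h =ᵐ[volume] 0 ∧ r = hlsQuotient d h}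
  have hCS : Cstar d = sSup S := rfl
  by_cases hS : BddAbove S
  · have hball : hlsQuotient d ((ball (0 : E d) 1).indicator 1) ∈ S :=
      ⟨_, InL1Lm_indicator_ball, indicator_ball_not_ae_eq_zero (by omega), rfl⟩
    have hC : 0 < Cstar d := (hlsQuotient_indicator_ball_pos hd).trans_le (le_csSup hS hball)
    obtain ⟨hM0, hlt⟩ := criticalQuotient_lt_Cstar hd hC hM
    obtain ⟨_, ⟨h, hh, hne, rfl⟩, hq⟩ := exists_lt_of_lt_csSup ⟨_, hball⟩ (hCS ▸ hlt)
    exact ⟨hM0, h, hh, hne, hq⟩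
  · -- `sSup` of an unbounded set of reals is `0`, so then `Mc d = 0`.
    have hMc : Mc d = 0 := by
      rw [Mc, hCS, Real.sSup_of_not_bddAbove hS, mul_zero, zero_mul, div_zero,
        Real.zero_rpow (by simp; omega)]
    obtain ⟨_, ⟨h, hh, hne, rfl⟩, hq⟩ := not_bddAbove_iff.mp hS (criticalQuotient d M)
    exact ⟨hMc ▸ hM, h, hh, hne, hq⟩

lemma Ffun_neg_of_criticalQuotient_lt (hd : 2 < d) (hm : MemLp h (ENNReal.ofReal (mexp d)) volume)
    (h0 : 0 ≤ᵐ[volume] h) (hq : criticalQuotient d (nrm d 1 h) < hlsQuotient d h) :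
    Ffun d h < 0 := by
  have hm1 : 0 < mexp d - 1 := by linarith [one_lt_mexp hd]
  have hc := cD_pos hd
  set P := nrm d 1 h ^ (2 / (d : ℝ))
  set N := nrm d (mexp d) h ^ mexp d
  have hP : 0 ≤ P := Real.rpow_nonneg nrm_nonneg _
  have hN : 0 ≤ N := Real.rpow_nonneg nrm_nonneg _
  have hPN : 0 < P * N := by
    refine (mul_nonneg hP hN).lt_of_ne fun h0 => hq.not_ge ?_
    rw [hlsQuotient, ← h0, div_zero, criticalQuotient]
    positivity
  have hP0 : 0 < P := hP.lt_of_ne (left_ne_zero_of_mul hPN.ne').symm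
  rw [criticalQuotient, hlsQuotient, div_lt_div_iff₀ (by positivity) hPN] at hq
  have hNW : 2 * N < Wfun d h * ((mexp d - 1) * cD d) :=
    lt_of_mul_lt_mul_left (by linarith) hP0.le
  rw [Ffun, ← nrm_rpow_eq_integral (by linarith) hm h0, sub_neg, one_div, inv_mul_lt_iff₀ hm1]
  linarith

lemma exists_mem_YM_Ffun_neg (hd : 2 < d) (hM : Mc d < M) : ∃ g ∈ YM d M, Ffun d g < 0 := by
  obtain ⟨hM0, h, hh, hne, hq⟩ := exists_criticalQuotient_lt_hlsQuotient hd hM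
  have hN : 0 < nrm d 1 h := nrm_pos one_pos (by simpa using hh.1) hne
  have hc : 0 < M / nrm d 1 h := div_pos hM0 hN
  have hmass : nrm d 1 (fun x => M / nrm d 1 h * h x) = M := by
    rw [nrm_const_mul hc.le, div_mul_cancel₀ _ hN.ne']
  have hg := hh.const_mul hc.le
  refine ⟨_, ⟨hg, hmass⟩, Ffun_neg_of_criticalQuotient_lt hd hg.2.1 hg.2.2 ?_⟩
  rwa [hmass, hlsQuotient_const_mul (by omega) hc]

end Quotient

/-- For `M > M_c` the free energy is unbounded below on `𝒴_M`: `μ_M = -∞`. -/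
theorem freeEnergy_unbounded_below (d : ℕ) (hd : 3 ≤ d) (M : ℝ) (hM : Mc d < M) :
    ∀ A : ℝ, ∃ h ∈ YM d M, Ffun d h < A := by
  intro A
  obtain ⟨g, ⟨hg, hgM⟩, hFg⟩ := exists_mem_YM_Ffun_neg hd hM
  have hd' : (0 : ℝ) < d - 2 := sub_pos.mpr (by exact_mod_cast hd)
  have hlim : Tendsto (fun l : ℝ => l ^ ((d : ℝ) - 2) * Ffun d g) atTop atBot :=
    (tendsto_rpow_atTop hd').atTop_mul_const_of_neg hFg
  obtain ⟨l, hlA, hl⟩ := ((hlim.eventually_lt_atBot A).and (eventually_gt_atTop 0)).exists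
  refine ⟨dilate d l g, ⟨hg.dilate hl, (nrm_one_dilate hg.1.1 hl).trans hgM⟩, ?_⟩
  rwa [Ffun_dilate (by omega) hg.2.2 hl]
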